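/- arXiv:2211.15934 — 3 statements merged into one kernel-verified Lean document; each statement's English description precedes it below -/
import Mathlib

section
/- Let (Ω, ℱ, ℙ) be a probability space with a discrete-time filtration (ℱ'_k)_{k=0,...,J} and random variables W'_0,...,W'_J where each W'_k is ℱ'_k-measurable and integrable. Let 𝒢'_k = ℱ'_k ∨ σ(Ȳ) for a fixed random vector Ȳ. If for every k, E[W'_k | ℱ'_{k-1} ∨ σ(Ȳ)] = E[W'_k | ℱ'_{k-1}] almost surely (discrete-time sequential exchangeability), and W'_k = W'_0 + M_k + A_k is the Doob decomposition of W' with respect to (ℱ'_k) (M a martingale, A predictable), then M is also a martingale with respect to the enlarged filtration (𝒢'_k). -/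
open MeasureTheory ProbabilityTheory Filter

/-!
Since `W (k+1) = W 0 + M (k+1) + A (k+1)` with `W 0 + A (k+1)` already `ℱ k`-measurable,
`M (k+1)` differs from `W (k+1)` by an `ℱ k`-measurable term. Hence sequential exchangeability for
`W (k+1)` gives `E[M (k+1) | 𝒢 k] = E[M (k+1) | ℱ k] = M k`, which is the martingale property
for `𝒢`.
-/

section

variable {Ω E : Type*} {m0 : MeasurableSpace Ω} {μ : Measure Ω}
  [NormedAddCommGroup E] [NormedSpace ℝ E] [CompleteSpace E]

theorem condExp_sub_stronglyMeasurable_eq_of_condExp_eq {m m' : MeasurableSpace Ω}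
    (hmm' : m ≤ m') (hm' : m' ≤ m0) [SigmaFinite (μ.trim (hmm'.trans hm'))]
    [SigmaFinite (μ.trim hm')] {f g : Ω → E} (hf : Integrable f μ) (hg : Integrable g μ)
    (hgm : StronglyMeasurable[m] g) (hfg : μ[f|m'] =ᵐ[μ] μ[f|m]) :
    μ[f - g|m'] =ᵐ[μ] μ[f - g|m] := by
  have hg' : μ[g|m'] = μ[g|m] := by
    rw [condExp_of_stronglyMeasurable hm' (hgm.mono hmm') hg,
      condExp_of_stronglyMeasurable (hmm'.trans hm') hgm hg]
  calc μ[f - g|m'] =ᵐ[μ] μ[f|m'] - μ[g|m'] := condExp_sub hf hg m'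
    _ =ᵐ[μ] μ[f|m] - μ[g|m] := by rw [hg']; exact hfg.sub EventuallyEq.rfl
    _ =ᵐ[μ] μ[f - g|m] := (condExp_sub hf hg m).symm

theorem MeasureTheory.Martingale.of_le_of_condExp_succ_eq [IsFiniteMeasure μ]
    {ℱ 𝒢 : Filtration ℕ m0} {f : ℕ → Ω → E} (hf : Martingale f ℱ μ)
    (hle : ∀ k, ℱ k ≤ 𝒢 k)
    (h : ∀ k, μ[f (k + 1)|𝒢 k] =ᵐ[μ] μ[f (k + 1)|ℱ k]) : Martingale f 𝒢 μ :=
  martingale_nat (fun k => (hf.stronglyAdapted k).mono (hle k)) hf.integrable fun k =>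
    ((h k).trans (hf.condExp_ae_eq k.le_succ)).symm

end

theorem martingalePart_martingale_enlarged_general
    {Ω E : Type*} {m0 : MeasurableSpace Ω} [MeasurableSpace E]
    (μ : Measure Ω) [IsProbabilityMeasure μ]
    (ℱ 𝒢 : Filtration ℕ m0)
    (Ybar : Ω → E)
    (h𝒢 : ∀ k, 𝒢 k = ℱ k ⊔ MeasurableSpace.comap Ybar inferInstance)
    (W M A : ℕ → Ω → ℝ)
    (hW_adapted : Adapted ℱ W) (hW_int : ∀ k, Integrable (W k) μ)
    (hdecomp : ∀ k ω, W k ω = W 0 ω + M k ω + A k ω)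
    (hM : Martingale M ℱ μ)
    (hA_pred : ∀ k, StronglyMeasurable[ℱ k] (A (k + 1)))
    (hexch : ∀ k, 1 ≤ k → μ[W k|𝒢 (k - 1)] =ᵐ[μ] μ[W k|ℱ (k - 1)]) :
    Martingale M 𝒢 μ := by
  have hle : ∀ k, ℱ k ≤ 𝒢 k := fun k => (h𝒢 k).symm ▸ le_sup_left
  refine hM.of_le_of_condExp_succ_eq hle fun k => ?_
  have hW0 : StronglyMeasurable[ℱ k] (W 0) :=
    ((hW_adapted 0).mono (ℱ.mono k.zero_le) le_rfl).stronglyMeasurable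
  have hpred : StronglyMeasurable[ℱ k] (W (k + 1) - M (k + 1)) := by
    have hWM : W (k + 1) - M (k + 1) = W 0 + A (k + 1) := by
      funext ω; simp only [Pi.sub_apply, Pi.add_apply, hdecomp (k + 1) ω]; ring
    exact hWM ▸ hW0.add (hA_pred k)
  rw [← sub_sub_cancel (W (k + 1)) (M (k + 1))]
  exact condExp_sub_stronglyMeasurable_eq_of_condExp_eq (hle k) (𝒢.le k) (hW_int _)
    ((hW_int _).sub (hM.integrable _)) hpred (by simpa using hexch (k + 1) k.succ_pos)

/-- In discrete time, under sequential exchangeability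
`E[W'_k | ℱ'_{k-1} ∨ σ(Ȳ)] = E[W'_k | ℱ'_{k-1}]`, the martingale part `M` of the Doob
decomposition of `W'` with respect to `(ℱ'_k)` remains a martingale with respect to the
initially enlarged filtration `𝒢'_k = ℱ'_k ∨ σ(Ȳ)`. -/
theorem martingalePart_martingale_enlarged
    {Ω E : Type*} {m0 : MeasurableSpace Ω} [MeasurableSpace E]
    (μ : Measure Ω) [IsProbabilityMeasure μ]
    (ℱ 𝒢 : Filtration ℕ m0)
    (Ybar : Ω → E) (hYbar : Measurable Ybar)
    (h𝒢 : ∀ k, 𝒢 k = ℱ k ⊔ MeasurableSpace.comap Ybar inferInstance)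
    (W M A : ℕ → Ω → ℝ)
    (hW_adapted : Adapted ℱ W) (hW_int : ∀ k, Integrable (W k) μ)
    (hdecomp : ∀ k ω, W k ω = W 0 ω + M k ω + A k ω)
    (hM : Martingale M ℱ μ) (hM0 : ∀ ω, M 0 ω = 0) (hA0 : ∀ ω, A 0 ω = 0)
    (hA_pred : ∀ k, StronglyMeasurable[ℱ k] (A (k + 1)))
    (hA_int : ∀ k, Integrable (A k) μ)
    (hexch : ∀ k, 1 ≤ k → μ[W k|𝒢 (k - 1)] =ᵐ[μ] μ[W k|ℱ (k - 1)]) :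
    Martingale M 𝒢 μ :=
  martingalePart_martingale_enlarged_general μ ℱ 𝒢 Ybar h𝒢 W M A hW_adapted hW_int hdecomp hM
    hA_pred hexch
end

section
/- Let (ℱ'_k) be a discrete-time filtration and 𝒢'_k = ℱ'_k ∨ σ(Ȳ) an initially enlarged filtration. Suppose M is an (ℱ'_k)-adapted integrable process satisfying E[M_k | 𝒢'_{k-1}] = E[M_k | ℱ'_{k-1}] a.s. for all k. If τ is an (ℱ'_k)-stopping time taking values in {0,1,...,J} and M is an (ℱ'_k)-local martingale localized by stopping times of this type, then for any such stopping time τ the stopped process M^τ satisfies E[M^τ_k | 𝒢'_{k-1}] = M^τ_{k-1} a.s., i.e., M^τ is a (𝒢'_k)-martingale. -/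
/-!
On `{τ ≤ k}` the stopped process is frozen, `M^τ_{k+1} = M^τ_k`, which is already
`ℱ_k`-measurable; on `{τ > k}`, an `ℱ_k`-measurable event, it equals `M_{k+1}`. Conditioning
on `𝒢_k ⊇ ℱ_k` therefore sees the first piece unchanged and the second only through
`E[M_{k+1} | 𝒢_k] = E[M_{k+1} | ℱ_k]`, so `E[M^τ_{k+1} | 𝒢_k] = E[M^τ_{k+1} | ℱ_k] = M^τ_k`.
-/

open MeasureTheory Set

namespace MeasureTheory

section CondExpEnlarged

variable {Ω E : Type*} [NormedAddCommGroup E] [NormedSpace ℝ E] [CompleteSpace E]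
  {m m' m0 : MeasurableSpace Ω} {μ : Measure Ω} {f g : Ω → E}

theorem condExp_add_ae_eq_of_stronglyMeasurable [IsFiniteMeasure μ] (hm : m ≤ m') (hm' : m' ≤ m0)
    (hg : StronglyMeasurable[m] g) (hgi : Integrable g μ) (hfi : Integrable f μ)
    (h : μ[f|m'] =ᵐ[μ] μ[f|m]) : μ[g + f|m'] =ᵐ[μ] μ[g + f|m] := by
  filter_upwards [condExp_add hgi hfi m', condExp_add hgi hfi m, h] with ω hadd' hadd hf
  rw [hadd', hadd, Pi.add_apply, Pi.add_apply, hf,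
    condExp_of_stronglyMeasurable hm' (hg.mono hm) hgi,
    condExp_of_stronglyMeasurable (hm.trans hm') hg hgi]

theorem condExp_indicator_ae_eq_of_ae_eq (hm : m ≤ m') {s : Set Ω} (hs : MeasurableSet[m] s)
    (hfi : Integrable f μ) (h : μ[f|m'] =ᵐ[μ] μ[f|m]) :
    μ[s.indicator f|m'] =ᵐ[μ] μ[s.indicator f|m] := by
  filter_upwards [condExp_indicator hfi (hm s hs), condExp_indicator hfi hs, h]
    with ω hind' hind hf
  rw [hind', hind]
  by_cases hω : ω ∈ s <;> simp [hω, hf]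

end CondExpEnlarged

theorem stoppedProcess_succ_eq_indicator_add {Ω β : Type*} [AddZeroClass β] (u : ℕ → Ω → β)
    (τ : Ω → WithTop ℕ) (k : ℕ) :
    stoppedProcess u τ (k + 1) =
      {ω | τ ω ≤ k}.indicator (stoppedProcess u τ k) + {ω | τ ω ≤ k}ᶜ.indicator (u (k + 1)) := by
  ext ω
  by_cases h : τ ω ≤ k
  · simp only [Pi.add_apply, indicator_apply, mem_compl_iff, mem_ofPred_eq, h, not_true_eq_false,
      if_true, if_false, add_zero]
    rw [Nat.cast_withTop] at h
    rw [stoppedProcess_eq_of_ge h,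
      stoppedProcess_eq_of_ge (h.trans (WithTop.coe_le_coe.mpr k.le_succ))]
  · simp only [Pi.add_apply, indicator_apply, mem_compl_iff, mem_ofPred_eq, h, not_false_eq_true,
      if_true, if_false, zero_add]
    refine stoppedProcess_eq_of_le ?_
    cases hτ : τ ω with
    | top => exact le_top
    | coe n =>
      rw [hτ, Nat.cast_withTop, WithTop.coe_le_coe] at h
      rw [WithTop.coe_le_coe]
      omega

variable {Ω E : Type*} [NormedAddCommGroup E] [NormedSpace ℝ E] [CompleteSpace E]
  {m0 : MeasurableSpace Ω} {μ : Measure Ω} [IsFiniteMeasure μ] {ℱ 𝒢 : Filtration ℕ m0}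

theorem condExp_stoppedProcess_succ_ae_eq {u : ℕ → Ω → E} {τ : Ω → WithTop ℕ} {k : ℕ}
    (hℱ𝒢 : ℱ k ≤ 𝒢 k) (hτ : IsStoppingTime ℱ τ)
    (hstop : StronglyMeasurable[ℱ k] (stoppedProcess u τ k))
    (hstop_int : Integrable (stoppedProcess u τ k) μ) (hu : Integrable (u (k + 1)) μ)
    (hexch : μ[u (k + 1)|𝒢 k] =ᵐ[μ] μ[u (k + 1)|ℱ k]) :
    μ[stoppedProcess u τ (k + 1)|𝒢 k] =ᵐ[μ] μ[stoppedProcess u τ (k + 1)|ℱ k] := by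
  have hs : MeasurableSet[ℱ k] {ω | τ ω ≤ k} := hτ.measurableSet_le k
  rw [stoppedProcess_succ_eq_indicator_add]
  exact condExp_add_ae_eq_of_stronglyMeasurable hℱ𝒢 (𝒢.le k) (hstop.indicator hs)
    (hstop_int.indicator (ℱ.le k _ hs)) (hu.indicator (ℱ.le k _ hs.compl))
    (condExp_indicator_ae_eq_of_ae_eq hℱ𝒢 hs.compl hu hexch)

theorem Martingale.of_le_of_condExp_succ_ae_eq {X : ℕ → Ω → E} (hX : Martingale X ℱ μ)
    (hℱ𝒢 : ℱ ≤ 𝒢) (h : ∀ k, μ[X (k + 1)|𝒢 k] =ᵐ[μ] μ[X (k + 1)|ℱ k]) : Martingale X 𝒢 μ :=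
  martingale_nat (fun k => (hX.stronglyAdapted k).mono (hℱ𝒢 k)) hX.integrable fun k =>
    ((h k).trans (hX.condExp_ae_eq k.le_succ)).symm

end MeasureTheory

theorem stoppedProcess_martingale_enlarged_general
    {Ω E : Type*} {m0 : MeasurableSpace Ω} [MeasurableSpace E]
    (μ : Measure Ω) [IsProbabilityMeasure μ]
    (ℱ 𝒢 : Filtration ℕ m0)
    (Ybar : Ω → E)
    (h𝒢 : ∀ k, 𝒢 k = ℱ k ⊔ MeasurableSpace.comap Ybar inferInstance)
    (M : ℕ → Ω → ℝ)
    (hM_int : ∀ k, Integrable (M k) μ)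
    (hexch : ∀ k, 1 ≤ k → μ[M k|𝒢 (k - 1)] =ᵐ[μ] μ[M k|ℱ (k - 1)])
    (τ : Ω → ℕ) (hτ : IsStoppingTime ℱ (fun ω => (τ ω : WithTop ℕ)))
    (hMτ : Martingale (stoppedProcess M (fun ω => (τ ω : WithTop ℕ))) ℱ μ) :
    (∀ k, 1 ≤ k →
      μ[stoppedProcess M (fun ω => (τ ω : WithTop ℕ)) k|𝒢 (k - 1)] =ᵐ[μ] stoppedProcess M (fun ω => (τ ω : WithTop ℕ)) (k - 1)) ∧
    Martingale (stoppedProcess M (fun ω => (τ ω : WithTop ℕ))) 𝒢 μ := by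
  have hℱ𝒢 : ℱ ≤ 𝒢 := fun k => h𝒢 k ▸ le_sup_left
  have hmart : Martingale (stoppedProcess M (fun ω => (τ ω : WithTop ℕ))) 𝒢 μ :=
    hMτ.of_le_of_condExp_succ_ae_eq hℱ𝒢 fun k =>
      condExp_stoppedProcess_succ_ae_eq (hℱ𝒢 k) hτ (hMτ.stronglyAdapted k) (hMτ.integrable k)
        (hM_int (k + 1)) (by simpa using hexch (k + 1) k.succ_pos)
  exact ⟨fun k _ => hmart.condExp_ae_eq (Nat.sub_le k 1), hmart⟩

/-- Discrete time, enlarged filtration `𝒢_k = ℱ_k ∨ σ(Ȳ)`.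
If `M` is `(ℱ_k)`-adapted, integrable, satisfies
`E[M_k | 𝒢_{k-1}] = E[M_k | ℱ_{k-1}]` a.s. for all `k ≥ 1`, and `τ` is an
`(ℱ_k)`-stopping time with values in `{0, …, J}` such that the stopped process `M^τ`
is an `(ℱ_k)`-martingale (localization), then
`E[M^τ_k | 𝒢_{k-1}] = M^τ_{k-1}` a.s. for all `k ≥ 1`, i.e. `M^τ` is a `(𝒢_k)`-martingale. -/
theorem stoppedProcess_martingale_enlarged
    {Ω E : Type*} {m0 : MeasurableSpace Ω} [MeasurableSpace E]
    (μ : Measure Ω) [IsProbabilityMeasure μ]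
    (ℱ 𝒢 : Filtration ℕ m0) (J : ℕ)
    (Ybar : Ω → E) (hYbar : Measurable Ybar)
    (h𝒢 : ∀ k, 𝒢 k = ℱ k ⊔ MeasurableSpace.comap Ybar inferInstance)
    (M : ℕ → Ω → ℝ)
    (hM_adapted : Adapted ℱ M) (hM_int : ∀ k, Integrable (M k) μ)
    (hexch : ∀ k, 1 ≤ k → μ[M k|𝒢 (k - 1)] =ᵐ[μ] μ[M k|ℱ (k - 1)])
    (τ : Ω → ℕ) (hτ : IsStoppingTime ℱ (fun ω => (τ ω : WithTop ℕ))) (hτ_le : ∀ ω, τ ω ≤ J)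
    (hMτ : Martingale (stoppedProcess M (fun ω => (τ ω : WithTop ℕ))) ℱ μ) :
    (∀ k, 1 ≤ k →
      μ[stoppedProcess M (fun ω => (τ ω : WithTop ℕ)) k|𝒢 (k - 1)] =ᵐ[μ] stoppedProcess M (fun ω => (τ ω : WithTop ℕ)) (k - 1)) ∧
    Martingale (stoppedProcess M (fun ω => (τ ω : WithTop ℕ))) 𝒢 μ :=
  stoppedProcess_martingale_enlarged_general μ ℱ 𝒢 Ybar h𝒢 M hM_int hexch τ hτ hMτ
end

section
/- (Identification of the causal slope in the discrete-time structural model.) Suppose Y'_J = Y'ᵇ + η₁* (T/J) Σ_{i=0}^{J-1} W'_i almost surely, where Y'ᵇ is a random variable (the baseline potential outcome) measurable with respect to σ(Ȳᵇ), and sequential exchangeability holds: E[W'_k | ℱ'_{k-1} ∨ σ(Ȳᵇ)] = E[W'_k | ℱ'_{k-1}] for all k, where Y'_{k-1} and W variables are adapted. Define f(η₁) = E[ Σ_{i=1}^J Y'_{i-1} (Y'_J − η₁ (T/J) Σ_{l=0}^{J-1} W'_l)(W'_i − E[W'_i|ℱ'_{i-1}]) ], assuming all expectations exist and Y'_{i-1}Y'ᵇ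 is integrable and Y'_{i-1} is ℱ'_{i-1}-measurable with Y'ᵇ σ(Ȳᵇ)-measurable. Then f(η₁*) = 0. -/
/-!
Substituting the structural equation, the `i`-th summand becomes `Y'_{i-1} Y'ᵇ` times the
treatment residual `W'_i - E[W'_i | ℱ'_{i-1}]`. The multiplier is measurable for
`𝒢 = ℱ'_{i-1} ∨ σ(Ȳᵇ)`, and sequential exchangeability says exactly that the residual has
zero conditional expectation given `𝒢`; by the pull-out property and the tower rule each
summand integrates to zero.
-/

open MeasureTheory

namespace MeasureTheory

variable {Ω E : Type*} {m m' m0 : MeasurableSpace Ω} {μ : Measure Ω}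
  [NormedAddCommGroup E] [NormedSpace ℝ E] [CompleteSpace E]

theorem condExp_sub_condExp_ae_eq_zero_of_condExp_ae_eq (hm : m ≤ m') (hm' : m' ≤ m0)
    [SigmaFinite (μ.trim hm')] {X : Ω → E} (hX : Integrable X μ)
    (hX_cond : μ[X|m'] =ᵐ[μ] μ[X|m]) :
    μ[X - μ[X|m]|m'] =ᵐ[μ] 0 := by
  have h_tower : μ[μ[X|m]|m'] = μ[X|m] :=
    condExp_of_stronglyMeasurable hm' (stronglyMeasurable_condExp.mono hm) integrable_condExp
  filter_upwards [condExp_sub hX (integrable_condExp (m := m) (f := X)) m', hX_cond]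
    with ω h_sub h_eq
  simp only [h_sub, Pi.sub_apply, h_tower, h_eq, sub_self, Pi.zero_apply]

theorem integral_mul_eq_zero_of_condExp_ae_eq_zero (hm : m ≤ m0) [SigmaFinite (μ.trim hm)]
    {g d : Ω → ℝ} (hg : StronglyMeasurable[m] g) (hgd : Integrable (g * d) μ)
    (hd : Integrable d μ) (hd_cond : μ[d|m] =ᵐ[μ] 0) :
    ∫ ω, g ω * d ω ∂μ = 0 := by
  have h_zero : μ[g * d|m] =ᵐ[μ] 0 := by
    filter_upwards [condExp_mul_of_stronglyMeasurable_left hg hgd hd, hd_cond] with ω h_pull h_d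
    simp only [h_pull, Pi.mul_apply, h_d, Pi.zero_apply, mul_zero]
  calc ∫ ω, g ω * d ω ∂μ = ∫ ω, (μ[g * d|m]) ω ∂μ := (integral_condExp hm).symm
    _ = 0 := by simp only [integral_congr_ae h_zero, Pi.zero_apply, integral_zero]

theorem integral_mul_sub_condExp_eq_zero (hm : m ≤ m') (hm' : m' ≤ m0)
    [SigmaFinite (μ.trim hm')]
    {g X : Ω → ℝ} (hg : StronglyMeasurable[m'] g) (hX : Integrable X μ)
    (hgX : Integrable (fun ω => g ω * (X ω - (μ[X|m]) ω)) μ)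
    (hX_cond : μ[X|m'] =ᵐ[μ] μ[X|m]) :
    ∫ ω, g ω * (X ω - (μ[X|m]) ω) ∂μ = 0 :=
  integral_mul_eq_zero_of_condExp_ae_eq_zero hm' hg hgX (hX.sub integrable_condExp)
    (condExp_sub_condExp_ae_eq_zero_of_condExp_ae_eq hm hm' hX hX_cond)

end MeasureTheory

theorem causal_slope_identification_general
    {Ω : Type*} {m0 : MeasurableSpace Ω}
    (μ : Measure Ω) [IsProbabilityMeasure μ]
    (ℱ : Filtration ℕ m0) (J : ℕ) (T η₁ : ℝ)
    (W Y : ℕ → Ω → ℝ) (Yb : Ω → ℝ)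
    (mYb : MeasurableSpace Ω) (hmYb : mYb ≤ m0)
    (hYb_meas : StronglyMeasurable[mYb] Yb)
    (hY_adapted : Adapted ℱ Y)
    (hW_int : ∀ k, Integrable (W k) μ)
    (hstruct : ∀ᵐ ω ∂μ,
      Y J ω = Yb ω + η₁ * (T / (J : ℝ)) * ∑ i ∈ Finset.range J, W i ω)
    (hexch : ∀ k, 1 ≤ k → μ[W k|ℱ (k - 1) ⊔ mYb] =ᵐ[μ] μ[W k|ℱ (k - 1)])
    (hint : ∀ i, 1 ≤ i → i ≤ J →
      Integrable (fun ω =>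
        Y (i - 1) ω * (Y J ω - η₁ * (T / (J : ℝ)) * ∑ l ∈ Finset.range J, W l ω) *
          (W i ω - (μ[W i|ℱ (i - 1)]) ω)) μ) :
    ∫ ω, (∑ i ∈ Finset.Icc 1 J,
        Y (i - 1) ω * (Y J ω - η₁ * (T / (J : ℝ)) * ∑ l ∈ Finset.range J, W l ω) *
          (W i ω - (μ[W i|ℱ (i - 1)]) ω)) ∂μ = 0 := by
  rw [integral_finsetSum _ fun i hi => hint i (Finset.mem_Icc.1 hi).1 (Finset.mem_Icc.1 hi).2]
  refine Finset.sum_eq_zero fun i hi => ?_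
  obtain ⟨hi_pos, hi_le⟩ := Finset.mem_Icc.1 hi
  have h_baseline : (fun ω =>
      Y (i - 1) ω * (Y J ω - η₁ * (T / (J : ℝ)) * ∑ l ∈ Finset.range J, W l ω) *
        (W i ω - (μ[W i|ℱ (i - 1)]) ω)) =ᵐ[μ]
      fun ω => (Y (i - 1) ω * Yb ω) * (W i ω - (μ[W i|ℱ (i - 1)]) ω) := by
    filter_upwards [hstruct] with ω hω
    rw [hω]
    ring
  have h_mult : StronglyMeasurable[ℱ (i - 1) ⊔ mYb] fun ω => Y (i - 1) ω * Yb ω :=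
    ((hY_adapted (i - 1)).stronglyMeasurable.mono le_sup_left).mul (hYb_meas.mono le_sup_right)
  rw [integral_congr_ae h_baseline]
  exact integral_mul_sub_condExp_eq_zero le_sup_left (sup_le (ℱ.le _) hmYb) h_mult (hW_int i)
    ((hint i hi_pos hi_le).congr h_baseline) (hexch i hi_pos)

/-- Identification of the causal slope in the discrete-time structural
model.  If `Y'_J = Y'ᵇ + η₁* (T/J) Σ_{i<J} W'_i` a.s. with `Y'ᵇ` measurable with respect
to `σ(Ȳᵇ)` (a sub-σ-algebra `mYb`), and sequential exchangeability
`E[W'_k | ℱ'_{k-1} ∨ σ(Ȳᵇ)] = E[W'_k | ℱ'_{k-1}]` holds, then the orthogonalization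
moment function `f` vanishes at the true parameter: `f(η₁*) = 0`. -/
theorem causal_slope_identification
    {Ω : Type*} {m0 : MeasurableSpace Ω}
    (μ : Measure Ω) [IsProbabilityMeasure μ]
    (ℱ : Filtration ℕ m0) (J : ℕ) (hJ : 1 ≤ J) (T η₁ : ℝ)
    (W Y : ℕ → Ω → ℝ) (Yb : Ω → ℝ)
    (mYb : MeasurableSpace Ω) (hmYb : mYb ≤ m0)
    (hYb_meas : StronglyMeasurable[mYb] Yb)
    (hW_adapted : Adapted ℱ W) (hY_adapted : Adapted ℱ Y)
    (hW_int : ∀ k, Integrable (W k) μ)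
    (hstruct : ∀ᵐ ω ∂μ,
      Y J ω = Yb ω + η₁ * (T / (J : ℝ)) * ∑ i ∈ Finset.range J, W i ω)
    (hexch : ∀ k, 1 ≤ k → μ[W k|ℱ (k - 1) ⊔ mYb] =ᵐ[μ] μ[W k|ℱ (k - 1)])
    (hint : ∀ i, 1 ≤ i → i ≤ J →
      Integrable (fun ω =>
        Y (i - 1) ω * (Y J ω - η₁ * (T / (J : ℝ)) * ∑ l ∈ Finset.range J, W l ω) *
          (W i ω - (μ[W i|ℱ (i - 1)]) ω)) μ) :
    ∫ ω, (∑ i ∈ Finset.Icc 1 J,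
        Y (i - 1) ω * (Y J ω - η₁ * (T / (J : ℝ)) * ∑ l ∈ Finset.range J, W l ω) *
          (W i ω - (μ[W i|ℱ (i - 1)]) ω)) ∂μ = 0 :=
  causal_slope_identification_general μ ℱ J T η₁ W Y Yb mYb hmYb hYb_meas hY_adapted hW_int hstruct
    hexch hint
end
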